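/- arXiv:1405.7786 — 8 statements merged into one kernel-verified Lean document; each statement's English description precedes it below -/
import Mathlib

section
/- Matricization of the contracted product: let α, β, γ be finite types and K a natural number, and let A : (α × β) × Fin K → ℝ and B : Fin K × γ → ℝ. Define the matrices M_A : Matrix α (β × Fin K) by M_A a (b,k) = A((a,b),k), M_B : Matrix (Fin K) γ by M_B k c = B(k,c), and M_C : Matrix α (β × γ) by M_C a (b,c) = Σ_{k : Fin K} A((a,b),k)·B(k,c). Then M_C = M_A * ((1 : Matrix β β) ⊗ₖ M_B), where ⊗ₖ denotes the Kronecker product of matrices (Matrix.kroneckerMap (·*·)). This is the identity (A•B)_{([m])} = A_{([m])}·(I_{I_{m+1}} ⊗ ⋯ ⊗ I_{I_{M−1}} ⊗ B_{(1)}). -/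
open Matrix

/-- **Matricization of the contracted product.**
`(A • B)_{([m])} = A_{([m])} · (I ⊗ B_{(1)})`: the mode-`(1,…,m)` matricization of the
contracted product `A • B` equals the matricization of `A` times the Kronecker product of
the identity (over the non-contracted trailing modes of `A`) with the mode-1
matricization of `B`. -/
theorem contracted_product_matricization {α β γ : Type*}
    [Fintype α] [Fintype β] [Fintype γ] [DecidableEq β]
    (K : ℕ) (A : (α × β) × Fin K → ℝ) (B : Fin K × γ → ℝ)
    (MA : Matrix α (β × Fin K) ℝ) (hMA : ∀ a b k, MA a (b, k) = A ((a, b), k))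
    (MB : Matrix (Fin K) γ ℝ) (hMB : ∀ k c, MB k c = B (k, c))
    (MC : Matrix α (β × γ) ℝ)
    (hMC : ∀ a b c, MC a (b, c) = ∑ k : Fin K, A ((a, b), k) * B (k, c)) :
    MC = MA * Matrix.kroneckerMap (· * ·) (1 : Matrix β β ℝ) MB := by
  ext a ⟨b, c⟩
  rw [hMC, Matrix.mul_apply, Fintype.sum_prod_type]
  rw [Finset.sum_eq_single b]
  · simp [hMA, hMB, Matrix.kroneckerMap]
  · intro b' _ hb'
    simp [Matrix.kroneckerMap, Matrix.one_apply_ne hb']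
  · simp
end

section
/- Hadamard product of two tensors in Tucker format: let X = ⟦G_X; A^(1),…,A^(N)⟧ with factors A^(n) : α_n × Fin (R n) → ℝ and Y = ⟦G_Y; B^(1),…,B^(N)⟧ with factors B^(n) : α_n × Fin (S n) → ℝ on the same index types α_n. Define the Kronecker core G_X ⊗ G_Y : ((n : Fin N) → Fin (R n) × Fin (S n)) → ℝ by (G_X ⊗ G_Y)(p) = G_X(fun n => (p n).1)·G_Y(fun n => (p n).2), and the mode-(M_n+1) Kronecker factors C^(n) : α_n × (Fin (R n) × Fin (S n)) → ℝ by C^(n)(a,(r,s)) = A^(n)(a,r)·B^(n)(a,s). Then for all a : (n : Fin N) → α_n, ⟦G_X ⊗ G_Y; C^(1),…,C^(N)⟧(a) = X(a)·Y(a); i.e. the Hadamard (elementwise) product X ⊛ Y is again in Tucker format. -/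
/-- **Hadamard product of two tensors in Tucker format.**
If `X = ⟦G_X; A^(1),…,A^(N)⟧` and `Y = ⟦G_Y; B^(1),…,B^(N)⟧` with the same mode index
types, then the Hadamard product `X ⊛ Y` is in Tucker format with the Kronecker core
`G_X ⊗ G_Y` and the mode-`(M_n+1)` Kronecker factors `C^(n)(a,(r,s)) = A^(n)(a,r)·B^(n)(a,s)`. -/
theorem tucker_hadamard (N : ℕ) (hN : 1 ≤ N) (R S : Fin N → ℕ)
    (α : Fin N → Type*) [∀ n, Fintype (α n)]
    (GX : ((n : Fin N) → Fin (R n)) → ℝ) (GY : ((n : Fin N) → Fin (S n)) → ℝ)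
    (A : (n : Fin N) → α n × Fin (R n) → ℝ) (B : (n : Fin N) → α n × Fin (S n) → ℝ)
    (C : (n : Fin N) → α n × (Fin (R n) × Fin (S n)) → ℝ)
    (hC : ∀ n a r s, C n (a, (r, s)) = A n (a, r) * B n (a, s))
    (a : (n : Fin N) → α n) :
    (∑ p : (n : Fin N) → Fin (R n) × Fin (S n),
        (GX fun n => (p n).1) * (GY fun n => (p n).2) * ∏ n, C n (a n, p n))
      = (∑ r : (n : Fin N) → Fin (R n), GX r * ∏ n, A n (a n, r n)) *
        (∑ s : (n : Fin N) → Fin (S n), GY s * ∏ n, B n (a n, s n)) := by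
  rw [Finset.sum_mul_sum]
  let e : (((n : Fin N) → Fin (R n)) × ((n : Fin N) → Fin (S n))) ≃
      ((n : Fin N) → Fin (R n) × Fin (S n)) :=
    { toFun := fun p n => (p.1 n, p.2 n)
      invFun := fun p => (fun n => (p n).1, fun n => (p n).2)
      left_inv := fun p => rfl
      right_inv := fun p => rfl }
  rw [← Fintype.sum_prod_type', ← Equiv.sum_comp e]
  refine Finset.sum_congr rfl fun p _ => ?_
  simp only [e, Equiv.coe_fn_mk, hC]
  rw [Finset.prod_mul_distrib]
  ring
end

section
/- Direct sum of two tensors in Tucker format: let X = ⟦G_X; A^(1),…,A^(N)⟧ with factors A^(n) : α_n × Fin (R n) → ℝ and Y = ⟦G_Y; B^(1),…,B^(N)⟧ with factors B^(n) : β_n × Fin (S n) → ℝ. Define the direct-sum core G_X ⊕ G_Y : ((n : Fin N) → Fin (R n) ⊕ Fin (S n)) → ℝ to take value G_X(r) when p n = Sum.inl (r n) for all n, value G_Y(s) when p n = Sum.inr (s n) for all n, and 0 otherwise; define the direct-sum factors C^(n) : (α_n ⊕ β_n) × (Fin (R n) ⊕ Fin (S n)) → ℝ by C^(n)(inl a,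 inl r) = A^(n)(a,r), C^(n)(inr b, inr s) = B^(n)(b,s), and 0 on mixed pairs. Then ⟦G_X ⊕ G_Y; C^(1),…,C^(N)⟧ equals the direct sum X ⊕ Y: it takes value X(a) at indices all of whose components are inl (a n), value Y(b) at indices all of whose components are inr (b n), and 0 at any mixed index. -/
/-- **Direct sum of two tensors in Tucker format.**
If `X = ⟦G_X; A^(1),…,A^(N)⟧` and `Y = ⟦G_Y; B^(1),…,B^(N)⟧`, then the Tucker tensor
built from the direct-sum core `G_X ⊕ G_Y` and the direct-sum factors `C^(n)` equals the
direct sum `X ⊕ Y`: it takes value `X(a)` on all-`inl` indices, `Y(b)` on all-`inr`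
indices, and `0` on mixed indices. -/
theorem tucker_direct_sum (N : ℕ) (hN : 1 ≤ N) (R S : Fin N → ℕ)
    (α β : Fin N → Type*) [∀ n, Fintype (α n)] [∀ n, Fintype (β n)]
    (GX : ((n : Fin N) → Fin (R n)) → ℝ) (GY : ((n : Fin N) → Fin (S n)) → ℝ)
    (A : (n : Fin N) → α n × Fin (R n) → ℝ) (B : (n : Fin N) → β n × Fin (S n) → ℝ)
    (Gsum : ((n : Fin N) → Fin (R n) ⊕ Fin (S n)) → ℝ)
    (hGl : ∀ r : (n : Fin N) → Fin (R n), Gsum (fun n => Sum.inl (r n)) = GX r)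
    (hGr : ∀ s : (n : Fin N) → Fin (S n), Gsum (fun n => Sum.inr (s n)) = GY s)
    (hG0 : ∀ p : (n : Fin N) → Fin (R n) ⊕ Fin (S n),
      ¬ (∀ n, (p n).isLeft = true) → ¬ (∀ n, (p n).isRight = true) → Gsum p = 0)
    (C : (n : Fin N) → (α n ⊕ β n) × (Fin (R n) ⊕ Fin (S n)) → ℝ)
    (hCll : ∀ n a r, C n (Sum.inl a, Sum.inl r) = A n (a, r))
    (hCrr : ∀ n b s, C n (Sum.inr b, Sum.inr s) = B n (b, s))
    (hClr : ∀ n a s, C n (Sum.inl a, Sum.inr s) = 0)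
    (hCrl : ∀ n b r, C n (Sum.inr b, Sum.inl r) = 0) :
    (∀ a : (n : Fin N) → α n,
      (∑ p : (n : Fin N) → Fin (R n) ⊕ Fin (S n),
          Gsum p * ∏ n, C n (Sum.inl (a n), p n))
        = ∑ r : (n : Fin N) → Fin (R n), GX r * ∏ n, A n (a n, r n)) ∧
    (∀ b : (n : Fin N) → β n,
      (∑ p : (n : Fin N) → Fin (R n) ⊕ Fin (S n),
          Gsum p * ∏ n, C n (Sum.inr (b n), p n))
        = ∑ s : (n : Fin N) → Fin (S n), GY s * ∏ n, B n (b n, s n)) ∧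
    (∀ i : (n : Fin N) → α n ⊕ β n,
      ¬ (∀ n, (i n).isLeft = true) → ¬ (∀ n, (i n).isRight = true) →
      (∑ p : (n : Fin N) → Fin (R n) ⊕ Fin (S n), Gsum p * ∏ n, C n (i n, p n)) = 0) := by
  have n0 : Fin N := ⟨0, hN⟩
  refine ⟨?_, ?_, ?_⟩
  · intro a
    set e : ((n : Fin N) → Fin (R n)) → ((n : Fin N) → Fin (R n) ⊕ Fin (S n)) :=
      fun r n => Sum.inl (r n) with he
    have hinj : Function.Injective e := fun r r' h => by
      funext n; exact Sum.inl.inj (congrFun h n)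
    rw [← Finset.sum_subset (Finset.subset_univ (Finset.univ.image e))
      (fun p _ hp => ?_)]
    · rw [Finset.sum_image (fun x _ y _ h => hinj h)]
      refine Finset.sum_congr rfl fun r _ => ?_
      rw [show e r = fun n => Sum.inl (r n) from rfl, hGl]
      congr 1
      exact Finset.prod_congr rfl fun n _ => hCll n (a n) (r n)
    · have hnl : ¬ ∀ n, (p n).isLeft = true := by
        intro h
        refine hp (Finset.mem_image.2 ⟨fun n => (p n).getLeft (h n), Finset.mem_univ _, ?_⟩)
        funext n
        obtain ⟨x, hx⟩ := Sum.isLeft_iff.1 (h n)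
        simp [he, hx]
      by_cases hr : ∀ n, (p n).isRight = true
      · have hz : C n0 (Sum.inl (a n0), p n0) = 0 := by
          obtain ⟨s, hs⟩ := Sum.isRight_iff.1 (hr n0)
          rw [hs]; exact hClr _ _ _
        rw [Finset.prod_eq_zero (Finset.mem_univ n0) hz, mul_zero]
      · rw [hG0 p hnl hr, zero_mul]
  · intro b
    set e : ((n : Fin N) → Fin (S n)) → ((n : Fin N) → Fin (R n) ⊕ Fin (S n)) :=
      fun s n => Sum.inr (s n) with he
    have hinj : Function.Injective e := fun r r' h => by
      funext n; exact Sum.inr.inj (congrFun h n)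
    rw [← Finset.sum_subset (Finset.subset_univ (Finset.univ.image e))
      (fun p _ hp => ?_)]
    · rw [Finset.sum_image (fun x _ y _ h => hinj h)]
      refine Finset.sum_congr rfl fun s _ => ?_
      rw [show e s = fun n => Sum.inr (s n) from rfl, hGr]
      congr 1
      exact Finset.prod_congr rfl fun n _ => hCrr n (b n) (s n)
    · have hnr : ¬ ∀ n, (p n).isRight = true := by
        intro h
        refine hp (Finset.mem_image.2 ⟨fun n => (p n).getRight (h n), Finset.mem_univ _, ?_⟩)
        funext n
        obtain ⟨x, hx⟩ := Sum.isRight_iff.1 (h n)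
        simp [he, hx]
      by_cases hl : ∀ n, (p n).isLeft = true
      · have hz : C n0 (Sum.inr (b n0), p n0) = 0 := by
          obtain ⟨r, hr⟩ := Sum.isLeft_iff.1 (hl n0)
          rw [hr]; exact hCrl _ _ _
        rw [Finset.prod_eq_zero (Finset.mem_univ n0) hz, mul_zero]
      · rw [hG0 p hl hnr, zero_mul]
  · intro i hil hir
    refine Finset.sum_eq_zero fun p _ => ?_
    by_cases hl : ∀ n, (p n).isLeft = true
    · push_neg at hil
      obtain ⟨m, hm⟩ := hil
      have hm' : (i m).isRight = true := Sum.not_isLeft.mp hm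
      obtain ⟨b, hb⟩ := Sum.isRight_iff.1 hm'
      obtain ⟨r, hr⟩ := Sum.isLeft_iff.1 (hl m)
      have hz : C m (i m, p m) = 0 := by rw [hb, hr]; exact hCrl _ _ _
      rw [Finset.prod_eq_zero (Finset.mem_univ m) hz, mul_zero]
    · by_cases hr : ∀ n, (p n).isRight = true
      · push_neg at hir
        obtain ⟨m, hm⟩ := hir
        have hm' : (i m).isLeft = true := Sum.not_isRight.mp hm
        obtain ⟨a, ha⟩ := Sum.isLeft_iff.1 hm'
        obtain ⟨s, hs⟩ := Sum.isRight_iff.1 (hr m)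
        have hz : C m (i m, p m) = 0 := by rw [ha, hs]; exact hClr _ _ _
        rw [Finset.prod_eq_zero (Finset.mem_univ m) hz, mul_zero]
      · rw [hG0 p hl hr, zero_mul]
end

section
/- Addition of two tensors in Tucker format: let X = ⟦G_X; A^(1),…,A^(N)⟧ with factors A^(n) : α_n × Fin (R n) → ℝ and Y = ⟦G_Y; B^(1),…,B^(N)⟧ with factors B^(n) : α_n × Fin (S n) → ℝ on the same index types α_n. Define the direct-sum core G_X ⊕ G_Y : ((n : Fin N) → Fin (R n) ⊕ Fin (S n)) → ℝ to take value G_X(r) when p n = Sum.inl (r n) for all n, value G_Y(s) when p n = Sum.inr (s n) for all n, and 0 otherwise; define the mode-(M_n+1) direct-sum factors C^(n) : α_n × (Fin (R n) ⊕ Fin (S n)) → ℝ by C^(n)(a, inl r) = A^(n)(a,r) and C^(n)(a, inr s) = B^(n)(a,s). Then for all a : (n : Fin N) → α_n, ⟦G_X ⊕ G_Y; C^(1),…,C^(N)⟧(a) = X(a) + Y(a). -/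
/-- **Addition of two tensors in Tucker format.**
If `X = ⟦G_X; A^(1),…,A^(N)⟧` and `Y = ⟦G_Y; B^(1),…,B^(N)⟧` with the same mode index
types, then the Tucker tensor built from the direct-sum core `G_X ⊕ G_Y` and the
mode-`(M_n+1)` direct-sum factors `C^(n)` equals the sum `X + Y`. -/
theorem tucker_add (N : ℕ) (hN : 1 ≤ N) (R S : Fin N → ℕ)
    (α : Fin N → Type*) [∀ n, Fintype (α n)]
    (GX : ((n : Fin N) → Fin (R n)) → ℝ) (GY : ((n : Fin N) → Fin (S n)) → ℝ)
    (A : (n : Fin N) → α n × Fin (R n) → ℝ) (B : (n : Fin N) → α n × Fin (S n) → ℝ)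
    (Gsum : ((n : Fin N) → Fin (R n) ⊕ Fin (S n)) → ℝ)
    (hGl : ∀ r : (n : Fin N) → Fin (R n), Gsum (fun n => Sum.inl (r n)) = GX r)
    (hGr : ∀ s : (n : Fin N) → Fin (S n), Gsum (fun n => Sum.inr (s n)) = GY s)
    (hG0 : ∀ p : (n : Fin N) → Fin (R n) ⊕ Fin (S n),
      ¬ (∀ n, (p n).isLeft = true) → ¬ (∀ n, (p n).isRight = true) → Gsum p = 0)
    (C : (n : Fin N) → α n × (Fin (R n) ⊕ Fin (S n)) → ℝ)
    (hCl : ∀ n a r, C n (a, Sum.inl r) = A n (a, r))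
    (hCr : ∀ n a s, C n (a, Sum.inr s) = B n (a, s))
    (a : (n : Fin N) → α n) :
    (∑ p : (n : Fin N) → Fin (R n) ⊕ Fin (S n), Gsum p * ∏ n, C n (a n, p n))
      = (∑ r : (n : Fin N) → Fin (R n), GX r * ∏ n, A n (a n, r n))
        + (∑ s : (n : Fin N) → Fin (S n), GY s * ∏ n, B n (a n, s n)) := by
  classical
  set f : ((n : Fin N) → Fin (R n)) → ((n : Fin N) → Fin (R n) ⊕ Fin (S n)) :=
    fun r n => Sum.inl (r n) with hf
  set g : ((n : Fin N) → Fin (S n)) → ((n : Fin N) → Fin (R n) ⊕ Fin (S n)) :=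
    fun s n => Sum.inr (s n) with hg
  have injf : Function.Injective f := by
    intro x y h
    funext n
    have := congrFun h n
    simpa [f] using this
  have injg : Function.Injective g := by
    intro x y h
    funext n
    have := congrFun h n
    simpa [g] using this
  set F : ((n : Fin N) → Fin (R n) ⊕ Fin (S n)) → ℝ :=
    fun p => Gsum p * ∏ n, C n (a n, p n) with hF
  have hsub : (Finset.univ.image f ∪ Finset.univ.image g : Finset _) ⊆ Finset.univ :=
    Finset.subset_univ _
  have hvanish : ∀ p ∈ (Finset.univ : Finset ((n : Fin N) → Fin (R n) ⊕ Fin (S n))),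
      p ∉ (Finset.univ.image f ∪ Finset.univ.image g) → F p = 0 := by
    intro p _ hp
    rw [Finset.mem_union, not_or] at hp
    have h1 : ¬ (∀ n, (p n).isLeft = true) := by
      intro hall
      apply hp.1
      have : ∀ n, ∃ y, p n = Sum.inl y := fun n => Sum.isLeft_iff.mp (hall n)
      choose r hr using this
      exact Finset.mem_image.mpr ⟨r, Finset.mem_univ _, by funext n; exact (hr n).symm⟩
    have h2 : ¬ (∀ n, (p n).isRight = true) := by
      intro hall
      apply hp.2
      have : ∀ n, ∃ y, p n = Sum.inr y := fun n => Sum.isRight_iff.mp (hall n)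
      choose s hs using this
      exact Finset.mem_image.mpr ⟨s, Finset.mem_univ _, by funext n; exact (hs n).symm⟩
    simp [F, hG0 p h1 h2]
  have hdisj : Disjoint (Finset.univ.image f) (Finset.univ.image g) := by
    rw [Finset.disjoint_left]
    rintro p hpf hpg
    obtain ⟨r, _, rfl⟩ := Finset.mem_image.mp hpf
    obtain ⟨s, _, hs⟩ := Finset.mem_image.mp hpg
    have := congrFun hs ⟨0, hN⟩
    simp [f, g] at this
  calc
    ∑ p, F p = ∑ p ∈ (Finset.univ.image f ∪ Finset.univ.image g), F p :=
      (Finset.sum_subset hsub hvanish).symm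
    _ = ∑ p ∈ Finset.univ.image f, F p + ∑ p ∈ Finset.univ.image g, F p :=
      Finset.sum_union hdisj
    _ = _ := by
      rw [Finset.sum_image (fun x _ y _ h => injf h),
        Finset.sum_image (fun x _ y _ h => injg h)]
      congr 1
      · exact Finset.sum_congr rfl fun r _ => by simp [F, f, hGl, hCl]
      · exact Finset.sum_congr rfl fun s _ => by simp [F, g, hGr, hCr]
end

section
/- Right recursion for the vectorized partial contracted product: fix TT-cores G^(n) with TT-ranks R₀ = 1, R₁, …, R_N = 1, and fix n with 1 ≤ n ≤ N−1. Let β be the multi-index type of modes n+1,…,N, regard G^{≥ n+1} as a vector v : Fin R_n × β → ℝ, and regard G^{≥ n} (after regrouping the index (r_{n−1}, i_n, i_{n+1},…,i_N) as ((r_{n−1}, i_n), (i_{n+1},…,i_N))) as a vector w : (Fin R_{n−1} × Fin I_n) × β → ℝ. Let M : Matrix (Fin R_n) (Fin R_{n−1} × Fin I_n) be the mode-3 matricization of G^(n), M r' (r, i) = G^(n)(r, i, r'). Then w = ((Mᵀ ⊗ₖ (1 : Matrix β β))).mulVec v, where ⊗ₖ is the Kronecker product of matrices; i.e. vec(G^{≥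 n}) = (G^(n)ᵀ_{(3)} ⊗ I_{I_{n+1}⋯I_N})·vec(G^{≥ n+1}). -/
open Matrix

/-- `ttSuf R I G i c k` is the partial contracted product of the `c` TT-cores
`G k, …, G (k+c−1)` evaluated at the multi-index `i`, as a function of the TT-rank index
at position `k`; all rank indices `k+1, …, k+c` are summed over. -/
noncomputable def ttSuf (R I : ℕ → ℕ)
    (G : (k : ℕ) → Fin (R k) × Fin (I k) × Fin (R (k + 1)) → ℝ)
    (i : (k : ℕ) → Fin (I k)) : (c : ℕ) → (k : ℕ) → Fin (R k) → ℝ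
  | 0, _, _ => 1
  | c + 1, k, a => ∑ b : Fin (R (k + 1)), G k (a, i k, b) * ttSuf R I G i c (k + 1) b

/-- **Right recursion for the vectorized partial contracted product.**
With `m = n−1` (so the paper's `n` satisfies `1 ≤ n ≤ N−1`), regarding `G^{≥ n+1}` as a
vector `v` indexed by `r_n × (i_{n+1},…,i_N)` and `G^{≥ n}` as a vector `w` indexed by
`(r_{n−1}, i_n) × (i_{n+1},…,i_N)`, one has
`vec(G^{≥ n}) = (G^(n)ᵀ_{(3)} ⊗ I_{I_{n+1}⋯I_N})·vec(G^{≥ n+1})`. -/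
theorem tt_right_recursion (N : ℕ)
    (I : ℕ → ℕ) (hI : ∀ k, 0 < I k)
    (R : ℕ → ℕ) (hR0 : R 0 = 1) (hRN : R N = 1)
    (G : (k : ℕ) → Fin (R k) × Fin (I k) × Fin (R (k + 1)) → ℝ)
    (m : ℕ) (hm : m + 1 < N)
    (v : Fin (R (m + 1)) × ((t : Fin (N - (m + 1))) → Fin (I (m + 1 + t))) → ℝ)
    (hv : ∀ (i : (k : ℕ) → Fin (I k)) (r : Fin (R (m + 1))),
      v (r, fun t => i (m + 1 + t)) = ttSuf R I G i (N - (m + 1)) (m + 1) r)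
    (w : (Fin (R m) × Fin (I m)) × ((t : Fin (N - (m + 1))) → Fin (I (m + 1 + t))) → ℝ)
    (hw : ∀ (i : (k : ℕ) → Fin (I k)) (r : Fin (R m)),
      w ((r, i m), fun t => i (m + 1 + t)) = ttSuf R I G i (N - m) m r)
    (M : Matrix (Fin (R (m + 1))) (Fin (R m) × Fin (I m)) ℝ)
    (hM : ∀ r' r x, M r' (r, x) = G m (r, x, r')) :
    w = (Matrix.kroneckerMap (· * ·) Mᵀ
          (1 : Matrix ((t : Fin (N - (m + 1))) → Fin (I (m + 1 + t)))
                      ((t : Fin (N - (m + 1))) → Fin (I (m + 1 + t))) ℝ)).mulVec v := by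
  funext p
  obtain ⟨⟨r, x⟩, j⟩ := p
  -- extend (x, j) to a global multi-index i
  set i : (k : ℕ) → Fin (I k) := fun k =>
    if h : m + 1 ≤ k ∧ k - (m + 1) < N - (m + 1) then
      Fin.cast (congrArg I (show m + 1 + ((⟨k - (m + 1), h.2⟩ : Fin (N - (m + 1))) : ℕ) = k by
        simp only [Fin.val_mk]; omega)) (j ⟨k - (m + 1), h.2⟩)
    else if h2 : k = m then Fin.cast (congrArg I h2.symm) x
    else ⟨0, hI k⟩ with hi
  have him : i m = x := by
    simp only [hi]
    rw [dif_neg (by omega)]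
    simp
  have hij : (fun t : Fin (N - (m + 1)) => i (m + 1 + t)) = j := by
    funext t
    simp only [hi]
    rw [dif_pos ⟨by omega, by omega⟩]
    have e : (⟨m + 1 + ↑t - (m + 1), by omega⟩ : Fin (N - (m + 1))) = t := by
      ext; simp
    have hval := congrArg (fun u => (j u : ℕ)) e
    exact Fin.ext (by simpa using hval)
  have hNm : N - m = (N - (m + 1)) + 1 := by omega
  have key : w ((r, x), j) = ∑ b : Fin (R (m + 1)), G m (r, x, b) * v (b, j) := by
    rw [← him, ← hij, hw i r, hNm]
    show (∑ b : Fin (R (m + 1)),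
        G m (r, i m, b) * ttSuf R I G i (N - (m + 1)) (m + 1) b) = _
    refine Finset.sum_congr rfl fun b _ => ?_
    rw [hv i b]
  rw [key]
  simp only [Matrix.mulVec, dotProduct, Fintype.sum_prod_type,
    Matrix.kroneckerMap_apply, Matrix.transpose_apply, Matrix.one_apply, hM,
    mul_ite, mul_one, mul_zero, ite_mul, zero_mul, Finset.sum_ite_eq,
    Finset.mem_univ, if_true]
end

section
/- Orthonormality of the left interface matrix: fix TT-cores G^(n) with TT-ranks R₀ = 1, R₁, …, R_N = 1 and fix n with 1 ≤ n ≤ N. If each core G^(k) for k = 1,…,n−1 is left-orthogonal, i.e. Σ_{r : Fin R_{k−1}} Σ_{i : Fin I_k} G^(k)(r,i,s)·G^(k)(r,i,s') = (if s = s' then 1 else 0) for all s, s' : Fin R_k, then the matricization G^{<n}_{(n)} has orthonormal rows: for all r, r' : Fin R_{n−1}, Σ over all multi-indices (i₁,…,i_{n−1}) of G^{<n}(i₁,…,i_{n−1}; r)·G^{<n}(i₁,…,i_{n−1}; r') equals (if r = r' then 1 else 0). -/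
/-- `ttPreF R I G len j` is the partial contracted product `G^{≤ len}` (the paper's
`G^{<len+1}`) of the TT-cores `G 0, …, G (len−1)`, as a function of the multi-index
`j = (i₁,…,i_len)` of the first `len` modes and of the TT-rank index at position `len`;
all rank indices `0, …, len−1` are summed over (`G^{<1} = 1`). -/
noncomputable def ttPreF (R I : ℕ → ℕ)
    (G : (k : ℕ) → Fin (R k) × Fin (I k) × Fin (R (k + 1)) → ℝ) :
    (len : ℕ) → ((k : Fin len) → Fin (I k)) → Fin (R len) → ℝ
  | 0, _, _ => 1
  | len + 1, j, b => ∑ c : Fin (R len),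
      ttPreF R I G len (fun k => j k.castSucc) c * G len (c, j (Fin.last len), b)

private lemma sum_swap4 {α β γ δ : Type*} [Fintype α] [Fintype β] [Fintype γ] [Fintype δ]
    (g : α → β → γ → δ → ℝ) :
    ∑ a, ∑ b, ∑ c, ∑ d, g a b c d = ∑ c, ∑ d, ∑ a, ∑ b, g a b c d := by
  calc ∑ a, ∑ b, ∑ c, ∑ d, g a b c d
      = ∑ a, ∑ c, ∑ b, ∑ d, g a b c d :=
        Finset.sum_congr rfl fun a _ => Finset.sum_comm
    _ = ∑ c, ∑ a, ∑ b, ∑ d, g a b c d := Finset.sum_comm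
    _ = ∑ c, ∑ a, ∑ d, ∑ b, g a b c d :=
        Finset.sum_congr rfl fun c _ => Finset.sum_congr rfl fun a _ => Finset.sum_comm
    _ = ∑ c, ∑ d, ∑ a, ∑ b, g a b c d :=
        Finset.sum_congr rfl fun c _ => Finset.sum_comm

private lemma tt_aux (I : ℕ → ℕ) (R : ℕ → ℕ) (hR0 : R 0 = 1)
    (G : (k : ℕ) → Fin (R k) × Fin (I k) × Fin (R (k + 1)) → ℝ)
    (m : ℕ)
    (horth : ∀ k, k < m → ∀ s s' : Fin (R (k + 1)),
      (∑ r : Fin (R k), ∑ x : Fin (I k), G k (r, x, s) * G k (r, x, s'))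
        = if s = s' then 1 else 0) :
    ∀ r r' : Fin (R m),
      (∑ j : (k : Fin m) → Fin (I k), ttPreF R I G m j r * ttPreF R I G m j r')
        = if r = r' then 1 else 0 := by
  induction m with
  | zero =>
    intro r r'
    have hrr : r = r' := by
      have h1 := r.isLt; have h2 := r'.isLt
      ext; omega
    subst hrr
    simp [ttPreF]
  | succ m ih =>
    intro r r'
    have ihm := ih (fun k hk => horth k (hk.trans (Nat.lt_succ_self m)))
    calc
      (∑ j : (k : Fin (m+1)) → Fin (I k), ttPreF R I G (m+1) j r * ttPreF R I G (m+1) j r')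
          = ∑ p : Fin (I m) × ((k : Fin m) → Fin (I (k.castSucc))),
              ttPreF R I G (m+1) (Fin.snocEquiv (fun k : Fin (m+1) => Fin (I k)) p) r *
              ttPreF R I G (m+1) (Fin.snocEquiv (fun k : Fin (m+1) => Fin (I k)) p) r' :=
        (Fintype.sum_equiv (Fin.snocEquiv (fun k : Fin (m+1) => Fin (I k))) _ _
          (fun p => rfl)).symm
      _ = ∑ x : Fin (I m), ∑ f : (k : Fin m) → Fin (I (k.castSucc)), ∑ c, ∑ c',
            (ttPreF R I G m f c * ttPreF R I G m f c') * (G m (c, x, r) * G m (c', x, r')) := by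
          rw [Fintype.sum_prod_type]
          refine Finset.sum_congr rfl fun x _ => Finset.sum_congr rfl fun f _ => ?_
          simp only [ttPreF, Fin.snocEquiv_apply, Fin.snoc_castSucc, Fin.snoc_last]
          rw [Finset.sum_mul_sum]
          exact Finset.sum_congr rfl fun c _ => Finset.sum_congr rfl fun c' _ => by ring
      _ = ∑ c, ∑ c', (if c = c' then (1:ℝ) else 0) *
            (∑ x, G m (c, x, r) * G m (c', x, r')) := by
          rw [sum_swap4]
          refine Finset.sum_congr rfl fun c _ => Finset.sum_congr rfl fun c' _ => ?_
          rw [← ihm c c', Finset.sum_mul_sum]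
          exact Finset.sum_comm
      _ = ∑ c, ∑ x, G m (c, x, r) * G m (c, x, r') := by
          simp [ite_mul]
      _ = if r = r' then 1 else 0 := horth m (Nat.lt_succ_self m) r r'

/-- **Orthonormality of the left interface matrix.**
With `m = n−1` (so the paper's `n` satisfies `1 ≤ n ≤ N`): if every core `G k` for
`k < m` is left-orthogonal, then the matricization `G^{<n}_{(n)}` has orthonormal rows:
`Σ_{i₁,…,i_{n−1}} G^{<n}(i; r)·G^{<n}(i; r') = δ_{r,r'}`. -/
theorem tt_left_orthonormal (N : ℕ) (hN : 1 ≤ N)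
    (I : ℕ → ℕ) (hI : ∀ k, 0 < I k)
    (R : ℕ → ℕ) (hR0 : R 0 = 1) (hRN : R N = 1)
    (G : (k : ℕ) → Fin (R k) × Fin (I k) × Fin (R (k + 1)) → ℝ)
    (m : ℕ) (hm : m < N)
    (horth : ∀ k, k < m → ∀ s s' : Fin (R (k + 1)),
      (∑ r : Fin (R k), ∑ x : Fin (I k), G k (r, x, s) * G k (r, x, s'))
        = if s = s' then 1 else 0) :
    ∀ r r' : Fin (R m),
      (∑ j : (k : Fin m) → Fin (I k), ttPreF R I G m j r * ttPreF R I G m j r')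
        = if r = r' then 1 else 0 :=
  tt_aux I R hR0 G m horth
end

section
/- Orthonormality of the right interface matrix: fix TT-cores G^(n) with TT-ranks R₀ = 1, R₁, …, R_N = 1 and fix n with 1 ≤ n ≤ N. If each core G^(k) for k = n+1,…,N is right-orthogonal, i.e. Σ_{i : Fin I_k} Σ_{r' : Fin R_k} G^(k)(s,i,r')·G^(k)(s',i,r') = (if s = s' then 1 else 0) for all s, s' : Fin R_{k−1}, then the matricization G^{>n}_{(1)} has orthonormal rows: for all r, r' : Fin R_n, Σ over all multi-indices (i_{n+1},…,i_N) of G^{>n}(r; i_{n+1},…,i_N)·G^{>n}(r'; i_{n+1},…,i_N) equals (if r = r' then 1 else 0). -/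
/-- A version of the partial contracted product taking only the relevant finitely many
mode indices. -/
noncomputable def ttSufFin (R I : ℕ → ℕ)
    (G : (k : ℕ) → Fin (R k) × Fin (I k) × Fin (R (k + 1)) → ℝ) :
    (c : ℕ) → (k : ℕ) → ((t : Fin c) → Fin (I (k + t))) → Fin (R k) → ℝ
  | 0, _, _, _ => 1
  | c + 1, k, j, a => ∑ b : Fin (R (k + 1)),
      G k (a, j ⟨0, Nat.succ_pos c⟩, b) *
        ttSufFin R I G c (k + 1)
          (fun t => Fin.cast (congrArg I (by simp only [Fin.val_succ]; omega)) (j t.succ)) b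

lemma fin_cast_apply {I : ℕ → ℕ} (i : (k : ℕ) → Fin (I k)) {m m' : ℕ} (h : m = m')
    (hI : I m = I m') : Fin.cast hI (i m) = i m' := by subst h; rfl

lemma ttSufFin_eq (R I : ℕ → ℕ)
    (G : (k : ℕ) → Fin (R k) × Fin (I k) × Fin (R (k + 1)) → ℝ)
    (i : (k : ℕ) → Fin (I k)) :
    ∀ c k (r : Fin (R k)), ttSufFin R I G c k (fun t => i (k + t)) r = ttSuf R I G i c k r := by
  intro c
  induction c with
  | zero => intro k r; rfl
  | succ c ih =>
    intro k r
    simp only [ttSufFin, ttSuf]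
    refine Finset.sum_congr rfl fun b _ => ?_
    congr 1
    rw [← ih (k + 1) b]
    congr 1
    funext t
    exact fin_cast_apply i (by simp only [Fin.val_succ]; omega) _
lemma ttSufFin_orthonormal (N : ℕ) (I R : ℕ → ℕ) (hRN : R N = 1)
    (G : (k : ℕ) → Fin (R k) × Fin (I k) × Fin (R (k + 1)) → ℝ) (n : ℕ)
    (horth : ∀ k, n ≤ k → k < N → ∀ s s' : Fin (R k),
      (∑ x : Fin (I k), ∑ r' : Fin (R (k + 1)), G k (s, x, r') * G k (s', x, r'))
        = if s = s' then 1 else 0) :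
    ∀ c k, n ≤ k → k + c = N → ∀ r r' : Fin (R k),
      (∑ j : (t : Fin c) → Fin (I (k + t)),
          ttSufFin R I G c k j r * ttSufFin R I G c k j r')
        = if r = r' then 1 else 0 := by
  intro c
  induction c with
  | zero =>
    intro k hk hkN r r'
    have hRk : R k = 1 := by rw [show k = N by omega]; exact hRN
    have hrr : r = r' := by
      have h1 := r.isLt; have h2 := r'.isLt
      apply Fin.ext; omega
    simp [ttSufFin, hrr, Finset.card_univ]
  | succ c ih =>
    intro k hk hkN r r'
    have hT := ih (k + 1) (by omega) (by omega)
    calc (∑ j : (t : Fin (c + 1)) → Fin (I (k + t)),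
            ttSufFin R I G (c + 1) k j r * ttSufFin R I G (c + 1) k j r')
        = ∑ p : Fin (I (k + ((0 : Fin (c + 1)) : ℕ))) × ((t : Fin c) → Fin (I (k + (t.succ : ℕ)))),
            ttSufFin R I G (c + 1) k (Fin.cons p.1 p.2) r *
              ttSufFin R I G (c + 1) k (Fin.cons p.1 p.2) r' := by
          exact (Fintype.sum_equiv (Fin.consEquiv fun t : Fin (c + 1) => Fin (I (k + t)))
            _ _ (fun p => rfl)).symm
      _ = ∑ x : Fin (I (k + ((0 : Fin (c + 1)) : ℕ))),
            ∑ g : (t : Fin c) → Fin (I (k + (t.succ : ℕ))),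
            (∑ b : Fin (R (k + 1)), G k (r, x, b) *
                ttSufFin R I G c (k + 1)
                  (fun t => Fin.cast (congrArg I (by simp only [Fin.val_succ]; omega)) (g t)) b) *
            (∑ b : Fin (R (k + 1)), G k (r', x, b) *
                ttSufFin R I G c (k + 1)
                  (fun t => Fin.cast (congrArg I (by simp only [Fin.val_succ]; omega)) (g t)) b) := by
          rw [Fintype.sum_prod_type]
          refine Finset.sum_congr rfl fun x _ => Finset.sum_congr rfl fun g _ => ?_
          simp only [ttSufFin, Fin.mk_zero, Fin.cons_zero, Fin.cons_succ]
      _ = ∑ x : Fin (I (k + ((0 : Fin (c + 1)) : ℕ))),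
            ∑ g : (t : Fin c) → Fin (I (k + 1 + t)),
            (∑ b : Fin (R (k + 1)), G k (r, x, b) * ttSufFin R I G c (k + 1) g b) *
            (∑ b : Fin (R (k + 1)), G k (r', x, b) * ttSufFin R I G c (k + 1) g b) := by
          refine Finset.sum_congr rfl fun x _ => ?_
          refine Fintype.sum_equiv
            (Equiv.piCongrRight fun t : Fin c =>
              finCongr (congrArg I (by simp only [Fin.val_succ]; omega)))
            _ _ (fun g => ?_)
          rfl
      _ = ∑ x : Fin (I (k + ((0 : Fin (c + 1)) : ℕ))),
            ∑ b : Fin (R (k + 1)), ∑ b' : Fin (R (k + 1)),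
              G k (r, x, b) * G k (r', x, b') *
                ∑ g : (t : Fin c) → Fin (I (k + 1 + t)),
                  ttSufFin R I G c (k + 1) g b * ttSufFin R I G c (k + 1) g b' := by
          refine Finset.sum_congr rfl fun x _ => ?_
          simp only [Finset.sum_mul_sum]
          rw [Finset.sum_comm]
          refine Finset.sum_congr rfl fun b _ => ?_
          rw [Finset.sum_comm]
          refine Finset.sum_congr rfl fun b' _ => ?_
          rw [Finset.mul_sum]
          exact Finset.sum_congr rfl fun g _ => by ring
      _ = if r = r' then 1 else 0 := by
          simp only [hT, mul_ite, mul_one, mul_zero, Finset.sum_ite_eq, Finset.mem_univ,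
            if_true, Fin.val_zero, Nat.add_zero]
          exact horth k hk (by omega) r r'

lemma fin_cast_apply' {I : ℕ → ℕ} {n m : ℕ} (j : (t : Fin m) → Fin (I (n + t)))
    {t1 t2 : Fin m} (h : t1 = t2) (hh : I (n + t1) = I (n + t2)) :
    Fin.cast hh (j t1) = j t2 := by subst h; rfl

/-- **Orthonormality of the right interface matrix.**
Here the 0-based cores `G n, …, G (N−1)` are the paper's cores `n+1, …, N` and
`Q j r = G^{>n}(r; i_{n+1},…,i_N)` (the ranks at positions `n+1,…,N` being summed over).
If every core `G k` for `n ≤ k < N` is right-orthogonal, then the matricization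
`G^{>n}_{(1)}` has orthonormal rows:
`Σ_{i_{n+1},…,i_N} G^{>n}(r; i)·G^{>n}(r'; i) = δ_{r,r'}`. -/
theorem tt_right_orthonormal (N : ℕ)
    (I : ℕ → ℕ) (hI : ∀ k, 0 < I k)
    (R : ℕ → ℕ) (hR0 : R 0 = 1) (hRN : R N = 1)
    (G : (k : ℕ) → Fin (R k) × Fin (I k) × Fin (R (k + 1)) → ℝ)
    (n : ℕ) (hn1 : 1 ≤ n) (hn2 : n ≤ N)
    (horth : ∀ k, n ≤ k → k < N → ∀ s s' : Fin (R k),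
      (∑ x : Fin (I k), ∑ r' : Fin (R (k + 1)), G k (s, x, r') * G k (s', x, r'))
        = if s = s' then 1 else 0)
    (Q : ((t : Fin (N - n)) → Fin (I (n + t))) → Fin (R n) → ℝ)
    (hQ : ∀ (i : (k : ℕ) → Fin (I k)) (r : Fin (R n)),
      Q (fun t => i (n + t)) r = ttSuf R I G i (N - n) n r) :
    ∀ r r' : Fin (R n),
      (∑ j : (t : Fin (N - n)) → Fin (I (n + t)), Q j r * Q j r')
        = if r = r' then 1 else 0 := by
  intro r r'
  have hQS : ∀ j : (t : Fin (N - n)) → Fin (I (n + t)), ∀ s : Fin (R n),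
      Q j s = ttSufFin R I G (N - n) n j s := by
    intro j s
    set i : (k : ℕ) → Fin (I k) := fun k =>
      if h : n ≤ k ∧ k - n < N - n then
        Fin.cast (congrArg I (show n + ((⟨k - n, h.2⟩ : Fin (N - n)) : ℕ) = k by
          simp only [Fin.val_mk]; omega)) (j ⟨k - n, h.2⟩)
      else ⟨0, hI k⟩ with hi
    have hrest : (fun t : Fin (N - n) => i (n + (t : ℕ))) = j := by
      funext t
      have ht : n ≤ n + (t : ℕ) ∧ (n + (t : ℕ)) - n < N - n := by
        refine ⟨Nat.le_add_right _ _, ?_⟩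
        have := t.isLt; omega
      simp only [hi, dif_pos ht]
      exact fin_cast_apply' (I := I) (n := n) (m := N - n) j
        (t1 := ⟨n + (t : ℕ) - n, ht.2⟩) (t2 := t)
        (by apply Fin.ext; simp only [Fin.val_mk]; omega) _
    calc Q j s = Q (fun t : Fin (N - n) => i (n + (t : ℕ))) s := by rw [hrest]
      _ = ttSuf R I G i (N - n) n s := hQ i s
      _ = ttSufFin R I G (N - n) n (fun t : Fin (N - n) => i (n + (t : ℕ))) s :=
          (ttSufFin_eq R I G i _ n s).symm
      _ = ttSufFin R I G (N - n) n j s := by rw [hrest]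
  simp only [hQS]
  exact ttSufFin_orthonormal N I R hRN G n horth (N - n) n le_rfl (by omega) r r'
end

section
/- Matrix-vector product in TT format: let A be a linear operator in matrix TT format with cores A^(n) : Fin P_{n−1} × (Fin I_n × Fin J_n) × Fin P_n → ℝ and operator TT-ranks P₀ = 1, P₁, …, P_N = 1, and let x be represented in TT format with TT-cores X^(n) : Fin R_{n−1} × Fin J_n × Fin R_n → ℝ and TT-ranks R₀ = 1, R₁, …, R_N = 1. Define cores Z^(n) : (Fin P_{n−1} × Fin R_{n−1}) × Fin I_n × (Fin P_n × Fin R_n) → ℝ by Z^(n)((p,r), i, (p',r')) = Σ_{j : Fin J_n} A^(n)(p,(i,j),p')·X^(n)(r,j,r'). Then the tensor z : ((n : Fin N) → Fin I_n) → ℝ defined by z(i) = Σ_{j : (n : Fin N) → Fin J_n} A(fun n => (i n, j n))·x(j) satisfies, for every i, z(i) = Σ over all rank paths through the types Fin P_n × Fin R_n of the products Π_{n=1}^{N} Z^(n); i.e. the matrix-vector product A(x) is in TT format with cores Z^(n) and TT-ranks P_n·R_n. -/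
/-- **Matrix-vector product in TT format.**
If the linear operator `A` is in matrix TT format with cores `A k` (operator TT-ranks
`P`) and the vector `x` is in TT format with cores `X k` (TT-ranks `R`), then the
matrix-vector product `z = A(x)` is in TT format with the cores
`Z k ((p,r), i, (p',r')) = Σ_j A k (p,(i,j),p')·X k (r,j,r')` and TT-ranks `P n · R n`
(rank index types `Fin (P n) × Fin (R n)`). -/
theorem tt_matvec (N : ℕ)
    (I J : ℕ → ℕ) (hI : ∀ k, 0 < I k) (hJ : ∀ k, 0 < J k)
    (P : ℕ → ℕ) (hP0 : P 0 = 1) (hPN : P N = 1)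
    (R : ℕ → ℕ) (hR0 : R 0 = 1) (hRN : R N = 1)
    (A : (k : ℕ) → Fin (P k) × (Fin (I k) × Fin (J k)) × Fin (P (k + 1)) → ℝ)
    (X : (k : ℕ) → Fin (R k) × Fin (J k) × Fin (R (k + 1)) → ℝ)
    (Afull : ((k : Fin N) → Fin (I k) × Fin (J k)) → ℝ)
    (hA : ∀ ij, Afull ij = ∑ p : (k : Fin (N + 1)) → Fin (P k),
        ∏ k : Fin N, A k (p k.castSucc, ij k, p k.succ))
    (x : ((k : Fin N) → Fin (J k)) → ℝ)
    (hx : ∀ j, x j = ∑ r : (k : Fin (N + 1)) → Fin (R k),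
        ∏ k : Fin N, X k (r k.castSucc, j k, r k.succ))
    (Z : (k : ℕ) →
      (Fin (P k) × Fin (R k)) × Fin (I k) × (Fin (P (k + 1)) × Fin (R (k + 1))) → ℝ)
    (hZ : ∀ k (pr : Fin (P k) × Fin (R k)) (y : Fin (I k))
        (pr' : Fin (P (k + 1)) × Fin (R (k + 1))),
      Z k (pr, y, pr') = ∑ j : Fin (J k), A k (pr.1, (y, j), pr'.1) * X k (pr.2, j, pr'.2))
    (i : (k : Fin N) → Fin (I k)) :
    (∑ j : (k : Fin N) → Fin (J k), Afull (fun k => (i k, j k)) * x j)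
      = ∑ q : (k : Fin (N + 1)) → Fin (P k) × Fin (R k),
          ∏ k : Fin N, Z k (q k.castSucc, i k, q k.succ) := by
  classical
  simp only [hA, hx, hZ]
  rw [Fintype.sum_equiv
    (⟨fun q => (fun k => (q k).1, fun k => (q k).2),
      fun pr k => (pr.1 k, pr.2 k), fun _ => rfl, fun _ => rfl⟩ :
      ((k : Fin (N+1)) → Fin (P k) × Fin (R k)) ≃
      ((k : Fin (N+1)) → Fin (P k)) × ((k : Fin (N+1)) → Fin (R k)))
    (fun q => ∏ k : Fin N,
      ∑ j : Fin (J k), A k ((q k.castSucc).1, (i k, j), (q k.succ).1)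
        * X k ((q k.castSucc).2, j, (q k.succ).2))
    (fun pr => ∏ k : Fin N,
      ∑ j : Fin (J k), A k (pr.1 k.castSucc, (i k, j), pr.1 k.succ)
        * X k (pr.2 k.castSucc, j, pr.2 k.succ))
    (fun q => rfl)]
  rw [Fintype.sum_prod_type]
  simp only [Finset.prod_univ_sum, Fintype.piFinset_univ, Finset.sum_mul_sum]
  rw [Finset.sum_comm]
  refine Finset.sum_congr rfl fun p _ => ?_
  rw [Finset.sum_comm]
  exact Finset.sum_congr rfl fun r _ => Finset.sum_congr rfl fun j _ =>
    (Finset.prod_mul_distrib).symm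
end
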